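/- Let 𝒜 be a finite alphabet and ℱ ⊆ 𝒜⁺ a set of forbidden factors. Suppose there exists a real β > 1 such that |ℒ_{n+1}(𝒜,ℱ)| ≥ β·|ℒ_n(𝒜,ℱ)| for all n ≥ 0, and such that C := 1 − Σ_{f∈ℱ} (|f|−1)·β^{−|f|} > 0. Then for all n, m ≥ 0, C²·|L̊_n(𝒜,ℱ)|·|L̊_m(𝒜,ℱ)| ≤ |L̊_{n+m}(𝒜,ℱ)| ≤ C^{−2}·|L̊_n(𝒜,ℱ)|·|L̊_m(𝒜,ℱ)|. -/

import Mathlib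

open Filter

/-- The set of words of length `n` over `A` avoiding every factor in `F`. -/
def langN {A : Type*} (F : Set (List A)) (n : ℕ) : Set (List A) :=
  {w | w.length = n ∧ ∀ f ∈ F, ¬ f <:+: w}

/-- The set of circularly `F`-free words of length `n` over `A`:
every rotation (conjugate) of the word avoids all factors in `F`. -/
def clangN {A : Type*} (F : Set (List A)) (n : ℕ) : Set (List A) :=
  {w | w.length = n ∧ ∀ k : ℕ, ∀ f ∈ F, ¬ f <:+: w.rotate k}

section Aux
variable {A : Type*}

lemma langN_finite [Finite A] (F : Set (List A)) (n : ℕ) : (langN F n).Finite :=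
  (List.finite_length_eq A n).subset fun _ hw => hw.1

lemma clangN_subset_langN (F : Set (List A)) (n : ℕ) : clangN F n ⊆ langN F n := by
  rintro w ⟨h1, h2⟩
  exact ⟨h1, fun f hf hinf => h2 0 f hf (by simpa using hinf)⟩

lemma crossing {u v f : List A} (h : f <:+: u ++ v) (hu : ¬ f <:+: u) (hv : ¬ f <:+: v) :
    ∃ x y, u ++ v = x ++ f ++ y ∧ x.length < u.length ∧ u.length < x.length + f.length := by
  obtain ⟨x, y, hxy⟩ := h
  refine ⟨x, y, hxy.symm, ?_, ?_⟩
  · by_contra hle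
    push_neg at hle
    have hfy : f ++ y <:+ u ++ v := ⟨x, by simpa [List.append_assoc] using hxy⟩
    have hsuf : f ++ y <:+ v := by
      refine List.suffix_of_suffix_length_le hfy (List.suffix_append u v) ?_
      have := congrArg List.length hxy
      simp only [List.length_append] at this ⊢
      omega
    exact hv (((List.prefix_append f y).isInfix).trans hsuf.isInfix)
  · by_contra hle
    push_neg at hle
    have hxf : x ++ f <+: u ++ v := ⟨y, by simpa [List.append_assoc] using hxy⟩
    have hpref : x ++ f <+: u := by
      refine List.prefix_of_prefix_length_le hxf (List.prefix_append u v) ?_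
      simpa using hle
    exact hu (((List.suffix_append x f).isInfix).trans hpref.isInfix)

lemma decomp {u v x y f : List A} (h : u ++ v = x ++ f ++ y) (h1 : x.length ≤ u.length)
    (h2 : u.length ≤ x.length + f.length) :
    u = x ++ f.take (u.length - x.length) ∧ v = f.drop (u.length - x.length) ++ y := by
  set j := u.length - x.length with hj
  have hsplit : (x ++ f.take j) ++ (f.drop j ++ y) = x ++ f ++ y := by
    rw [List.append_assoc x, ← List.append_assoc (f.take j), List.take_append_drop,
      ← List.append_assoc]
  rw [← hsplit] at h
  have hlen : u.length = (x ++ f.take j).length := by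
    simp only [List.length_append, List.length_take]
    omega
  exact List.append_inj h hlen

lemma circ_extract {F : Set (List A)} (hF : ∀ f ∈ F, f ≠ ([] : List A)) {n : ℕ} {w : List A}
    (hw : w ∈ langN F n) (hbad : w ∉ clangN F n) :
    ∃ f ∈ F, ∃ j mid, 1 ≤ j ∧ j < f.length ∧ f.length ≤ n ∧
      mid ∈ langN F (n - f.length) ∧
      w = f.drop (f.length - j) ++ mid ++ f.take (f.length - j) := by
  obtain ⟨hwl, hwav⟩ := hw
  have hbad' : ∃ k f, f ∈ F ∧ f <:+: w.rotate k := by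
    by_contra hc
    push_neg at hc
    exact hbad ⟨hwl, fun k f hf => hc k f hf⟩
  obtain ⟨k, f, hfF, hinf⟩ := hbad'
  have hn0 : 0 < n := by
    rcases Nat.eq_zero_or_pos n with h0 | h
    · exfalso
      have : w = [] := List.length_eq_zero_iff.mp (by omega)
      subst this
      rw [List.rotate_nil] at hinf
      exact hF f hfF (List.eq_nil_of_infix_nil hinf)
    · exact h
  set k' := k % w.length with hk'
  have hk'lt : k' < n := by rw [hk', hwl]; exact Nat.mod_lt _ (by omega)
  have hrot : w.rotate k = w.drop k' ++ w.take k' := by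
    rw [← List.rotate_mod w k, List.rotate_eq_drop_append_take (by omega)]
  rw [hrot] at hinf
  have hnu : ¬ f <:+: w.drop k' := fun h => hwav f hfF (h.trans (List.drop_suffix k' w).isInfix)
  have hnv : ¬ f <:+: w.take k' := fun h => hwav f hfF (h.trans (List.take_prefix k' w).isInfix)
  obtain ⟨x, y, heq, hx1, hx2⟩ := crossing hinf hnu hnv
  have hulen : (w.drop k').length = n - k' := by simp [hwl]
  have hvlen : (w.take k').length = k' := by simp [hwl]; omega
  obtain ⟨hu, hv⟩ := decomp heq (le_of_lt hx1) (le_of_lt hx2)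
  rw [hulen] at hu hv hx1 hx2
  have hlen_eq : (n - k') + k' = x.length + f.length + y.length := by
    have := congrArg List.length heq
    simp only [List.length_append] at this
    rw [hulen, hvlen] at this
    omega
  set j := x.length + f.length - (n - k') with hjdef
  have hsub : n - k' - x.length = f.length - j := by omega
  rw [hsub] at hu hv
  have hj1 : 1 ≤ j := by omega
  have hjlt : j < f.length := by omega
  have hflen : f.length ≤ n := by omega
  have hwd : w = f.drop (f.length - j) ++ (y ++ x) ++ f.take (f.length - j) := by
    conv_lhs => rw [← List.take_append_drop k' w]
    rw [hu, hv]
    simp [List.append_assoc]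
  have hmidlen : (y ++ x).length = n - f.length := by
    simp only [List.length_append]
    omega
  have hmidinf : (y ++ x) <:+: w := ⟨f.drop (f.length - j), f.take (f.length - j), by rw [← hwd]⟩
  exact ⟨f, hfF, j, y ++ x, hj1, hjlt, hflen,
    ⟨hmidlen, fun g hg hginf => hwav g hg (hginf.trans hmidinf)⟩, hwd⟩

lemma cat_extract {F : Set (List A)} {n m : ℕ} {u v : List A}
    (hu : u ∈ langN F n) (hv : v ∈ langN F m) (hbad : u ++ v ∉ langN F (n + m)) :
    ∃ f ∈ F, ∃ j x y, 1 ≤ j ∧ j < f.length ∧ f.length - j ≤ n ∧ j ≤ m ∧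
      x ∈ langN F (n - (f.length - j)) ∧ y ∈ langN F (m - j) ∧
      u = x ++ f.take (f.length - j) ∧ v = f.drop (f.length - j) ++ y := by
  obtain ⟨hul, huav⟩ := hu
  obtain ⟨hvl, hvav⟩ := hv
  have hbad' : ∃ f ∈ F, f <:+: u ++ v := by
    by_contra hc
    push_neg at hc
    exact hbad ⟨by simp [hul, hvl], hc⟩
  obtain ⟨f, hfF, hinf⟩ := hbad'
  obtain ⟨x, y, heq, hx1, hx2⟩ := crossing hinf (huav f hfF) (hvav f hfF)
  obtain ⟨hueq, hveq⟩ := decomp heq (le_of_lt hx1) (le_of_lt hx2)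
  rw [hul] at hueq hveq hx1 hx2
  have hlen_eq : n + m = x.length + f.length + y.length := by
    have := congrArg List.length heq
    simp only [List.length_append] at this
    rw [hul, hvl] at this
    omega
  set j := x.length + f.length - n with hjdef
  have hsub : n - x.length = f.length - j := by omega
  rw [hsub] at hueq hveq
  have hj1 : 1 ≤ j := by omega
  have hjlt : j < f.length := by omega
  have hfjn : f.length - j ≤ n := by omega
  have hjm : j ≤ m := by omega
  have hxinf : x <:+: u := ⟨[], f.take (f.length - j), by rw [hueq]; simp⟩
  have hyinf : y <:+: v := ⟨f.drop (f.length - j), [], by rw [hveq]; simp⟩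
  have hxlen : x.length = n - (f.length - j) := by omega
  have hylen : y.length = m - j := by omega
  exact ⟨f, hfF, j, x, y, hj1, hjlt, hfjn, hjm,
    ⟨hxlen, fun g hg hginf => huav g hg (hginf.trans hxinf)⟩,
    ⟨hylen, fun g hg hginf => hvav g hg (hginf.trans hyinf)⟩, hueq, hveq⟩

lemma count_bad {A γ δ : Type*} (F : Set (List A)) (β : ℝ) (hβ : 0 < β)
    (hFlen : ∀ f ∈ F, 1 ≤ f.length)
    (hsum : Summable fun f : F =>
      (((f : List A).length : ℝ) - 1) * β ^ (-((f : List A).length : ℤ)))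
    (M : ℝ) (hM : 0 ≤ M) (B : Finset γ) (φ : γ → List A × ℕ × δ)
    (hinj : ∀ w ∈ B, ∀ w' ∈ B, φ w = φ w' → w = w')
    (D : List A → ℕ → Set δ)
    (hmem : ∀ w ∈ B, (φ w).1 ∈ F ∧ 1 ≤ (φ w).2.1 ∧ (φ w).2.1 < (φ w).1.length ∧
      (φ w).2.2 ∈ D (φ w).1 (φ w).2.1)
    (hD : ∀ w ∈ B, (D (φ w).1 (φ w).2.1).Finite ∧
      ((D (φ w).1 (φ w).2.1).ncard : ℝ) ≤ β ^ (-(((φ w).1.length : ℤ))) * M) :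
    (B.card : ℝ) ≤
      (∑' f : F, (((f : List A).length : ℝ) - 1) * β ^ (-((f : List A).length : ℤ))) * M := by
  classical
  set key : γ → List A × ℕ := fun w => ((φ w).1, (φ w).2.1) with hkey
  set K : Finset (List A × ℕ) := B.image key with hK
  have hcard : B.card = ∑ p ∈ K, (B.filter fun w => key w = p).card :=
    Finset.card_eq_sum_card_fiberwise fun w hw => Finset.mem_image_of_mem key hw
  set g : List A × ℕ → ℝ := fun p => β ^ (-((p.1.length : ℤ))) * M with hg
  have hg0 : ∀ p, 0 ≤ g p := fun p => mul_nonneg (zpow_nonneg hβ.le _) hM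
  -- fiber bound
  have hfiber : ∀ p ∈ K, ((B.filter fun w => key w = p).card : ℝ) ≤ g p := by
    intro p hp
    obtain ⟨w₀, hw₀B, hw₀⟩ := Finset.mem_image.mp hp
    subst hw₀
    obtain ⟨hDfin, hDcard⟩ := hD w₀ hw₀B
    have h1 : (B.filter fun w => key w = key w₀).card ≤ hDfin.toFinset.card := by
      apply Finset.card_le_card_of_injOn (fun w => (φ w).2.2)
      · intro w hw
        obtain ⟨hwB, hwk⟩ := Finset.mem_filter.mp hw
        rw [hkey] at hwk
        simp only [Prod.mk.injEq] at hwk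
        obtain ⟨e1, e2⟩ := hwk
        rw [Finset.mem_coe, Set.Finite.mem_toFinset, ← e1, ← e2]
        exact (hmem w hwB).2.2.2
      · intro w hw w' hw' hee
        obtain ⟨hwB, hwk⟩ := Finset.mem_filter.mp (by exact_mod_cast hw)
        obtain ⟨hw'B, hw'k⟩ := Finset.mem_filter.mp (by exact_mod_cast hw')
        apply hinj w hwB w' hw'B
        rw [hkey] at hwk hw'k
        simp only [Prod.mk.injEq] at hwk hw'k
        have e1 : (φ w).1 = (φ w').1 := by rw [hwk.1, hw'k.1]
        have e2 : (φ w).2.1 = (φ w').2.1 := by rw [hwk.2, hw'k.2]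
        exact Prod.ext e1 (Prod.ext e2 hee)
    have h2 : (hDfin.toFinset.card : ℝ) ≤ g (key w₀) := by
      rw [← Set.ncard_eq_toFinset_card _ hDfin]
      exact hDcard
    calc ((B.filter fun w => key w = key w₀).card : ℝ) ≤ (hDfin.toFinset.card : ℝ) := by
          exact_mod_cast h1
      _ ≤ g (key w₀) := h2
  have step1 : (B.card : ℝ) ≤ ∑ p ∈ K, g p := by
    rw [hcard]
    push_cast
    exact Finset.sum_le_sum hfiber
  -- regroup over first components
  set F₀ : Finset (List A) := K.image Prod.fst with hF₀
  have hF₀F : ∀ f ∈ F₀, f ∈ F := by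
    intro f hf
    obtain ⟨p, hp, hpf⟩ := Finset.mem_image.mp hf
    obtain ⟨w, hwB, hwk⟩ := Finset.mem_image.mp hp
    subst hwk; subst hpf
    exact (hmem w hwB).1
  set T : Finset (List A × ℕ) := F₀.biUnion (fun f => {f} ×ˢ Finset.Ico 1 f.length) with hT
  have hKT : K ⊆ T := by
    intro p hp
    obtain ⟨w, hwB, hwk⟩ := Finset.mem_image.mp hp
    rw [hT, Finset.mem_biUnion]
    refine ⟨p.1, Finset.mem_image.mpr ⟨p, hp, rfl⟩, ?_⟩
    rw [Finset.mem_product, Finset.mem_singleton, Finset.mem_Ico]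
    subst hwk
    exact ⟨rfl, (hmem w hwB).2.1, (hmem w hwB).2.2.1⟩
  have step2 : ∑ p ∈ K, g p ≤ ∑ p ∈ T, g p :=
    Finset.sum_le_sum_of_subset_of_nonneg hKT fun p _ _ => hg0 p
  have step3 : ∑ p ∈ T, g p = ∑ f ∈ F₀, ((f.length : ℝ) - 1) * (β ^ (-((f.length : ℤ))) * M) := by
    rw [hT, Finset.sum_biUnion]
    · apply Finset.sum_congr rfl
      intro f hf
      rw [Finset.sum_product, Finset.sum_singleton]
      have hgconst : ∀ y : ℕ, g (f, y) = β ^ (-((f.length : ℤ))) * M := fun y => rfl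
      rw [Finset.sum_congr rfl (fun y _ => hgconst y), Finset.sum_const, Nat.card_Ico]
      have h1 : 1 ≤ f.length := hFlen f (hF₀F f hf)
      rw [nsmul_eq_mul]
      congr 1
      push_cast [h1]
      ring
    · intro a ha b hb hab
      apply Finset.disjoint_left.mpr
      intro p hpa hpb
      rw [Finset.mem_product, Finset.mem_singleton] at hpa hpb
      exact hab (hpa.1 ▸ hpb.1)
  have step4 : ∑ f ∈ F₀, ((f.length : ℝ) - 1) * (β ^ (-((f.length : ℤ))) * M) ≤
      (∑' f : F, (((f : List A).length : ℝ) - 1) * β ^ (-((f : List A).length : ℤ))) * M := by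
    have key4 : ∑ f ∈ F₀, ((f.length : ℝ) - 1) * β ^ (-((f.length : ℤ))) ≤
        ∑' f : F, (((f : List A).length : ℝ) - 1) * β ^ (-((f : List A).length : ℤ)) := by
      have hsub := Finset.sum_subtype_eq_sum_filter
        (fun l : List A => ((l.length : ℝ) - 1) * β ^ (-((l.length : ℤ))))
        (s := F₀) (p := (· ∈ F))
      have hfilter : F₀.filter (· ∈ F) = F₀ := Finset.filter_true_of_mem fun f hf => hF₀F f hf
      rw [← hfilter, ← hsub]
      apply Summable.sum_le_tsum _ _ hsum
      intro f _
      have h1 : 1 ≤ (f : List A).length := hFlen f f.2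
      have : (0:ℝ) ≤ ((f : List A).length : ℝ) - 1 := by
        have : (1:ℝ) ≤ ((f : List A).length : ℝ) := by exact_mod_cast h1
        linarith
      exact mul_nonneg this (zpow_nonneg hβ.le _)
    calc ∑ f ∈ F₀, ((f.length : ℝ) - 1) * (β ^ (-((f.length : ℤ))) * M)
        = (∑ f ∈ F₀, ((f.length : ℝ) - 1) * β ^ (-((f.length : ℤ)))) * M := by
          rw [Finset.sum_mul]; apply Finset.sum_congr rfl; intros; ring
      _ ≤ _ := by
          apply mul_le_mul_of_nonneg_right key4 hM
  linarith [step1, step2, step3.le, step3.ge, step4]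


end Aux

section Main
variable {A : Type*}

lemma ncard_sprod {α β : Type*} (s : Set α) (t : Set β) :
    (s ×ˢ t).ncard = s.ncard * t.ncard := by
  rw [← Nat.card_coe_set_eq, ← Nat.card_coe_set_eq, ← Nat.card_coe_set_eq,
    ← Nat.card_prod]
  exact Nat.card_congr (Equiv.Set.prod s t)

variable {F : Set (List A)} {β : ℝ}

lemma growth_pow (hβ : 1 < β)
    (hgrow : ∀ n : ℕ, β * ((langN F n).ncard : ℝ) ≤ ((langN F (n + 1)).ncard : ℝ)) :
    ∀ a b : ℕ, β ^ b * ((langN F a).ncard : ℝ) ≤ ((langN F (a + b)).ncard : ℝ) := by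
  intro a b
  induction b with
  | zero => simp
  | succ b ih =>
      calc β ^ (b + 1) * ((langN F a).ncard : ℝ) = β * (β ^ b * ((langN F a).ncard : ℝ)) := by
            ring
        _ ≤ β * ((langN F (a + b)).ncard : ℝ) := by
            apply mul_le_mul_of_nonneg_left ih (by linarith)
        _ ≤ ((langN F (a + b + 1)).ncard : ℝ) := hgrow (a + b)

lemma growth_inv (hβ : 1 < β)
    (hgrow : ∀ n : ℕ, β * ((langN F n).ncard : ℝ) ≤ ((langN F (n + 1)).ncard : ℝ))
    {k n : ℕ} (hk : k ≤ n) :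
    ((langN F (n - k)).ncard : ℝ) ≤ β ^ (-(k : ℤ)) * ((langN F n).ncard : ℝ) := by
  have hβ0 : (0:ℝ) < β := by linarith
  have h := growth_pow hβ hgrow (n - k) k
  rw [Nat.sub_add_cancel hk] at h
  have hpow : (0:ℝ) < β ^ k := pow_pos hβ0 k
  rw [zpow_neg, zpow_natCast]
  rw [← mul_le_mul_iff_right₀ hpow]
  calc β ^ k * ((langN F (n - k)).ncard : ℝ) ≤ ((langN F n).ncard : ℝ) := h
    _ = β ^ k * ((β ^ k)⁻¹ * ((langN F n).ncard : ℝ)) := by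
        field_simp

lemma circ_count [Finite A] (hF : ∀ f ∈ F, f ≠ ([] : List A)) (hβ : 1 < β)
    (hgrow : ∀ n : ℕ, β * ((langN F n).ncard : ℝ) ≤ ((langN F (n + 1)).ncard : ℝ))
    (hsum : Summable fun f : F =>
      (((f : List A).length : ℝ) - 1) * β ^ (-((f : List A).length : ℤ)))
    (n : ℕ) :
    ((langN F n).ncard : ℝ) -
      (∑' f : F, (((f : List A).length : ℝ) - 1) * β ^ (-((f : List A).length : ℤ))) *
        ((langN F n).ncard : ℝ) ≤ ((clangN F n).ncard : ℝ) := by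
  classical
  have hβ0 : (0:ℝ) < β := by linarith
  have hFlen : ∀ f ∈ F, 1 ≤ f.length := by
    intro f hf
    have := hF f hf
    cases f with
    | nil => exact absurd rfl this
    | cons a l => simp
  have Lfin := langN_finite F n
  have Csub := clangN_subset_langN F n
  have Cfin : (clangN F n).Finite := Lfin.subset Csub
  set Bad : Set (List A) := langN F n \ clangN F n with hBad
  have BadFin : Bad.Finite := Lfin.subset Set.diff_subset
  set B : Finset (List A) := BadFin.toFinset with hB
  set Q : List A → List A × ℕ × List A → Prop := fun w p =>
    p.1 ∈ F ∧ 1 ≤ p.2.1 ∧ p.2.1 < p.1.length ∧ p.1.length ≤ n ∧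
      p.2.2 ∈ langN F (n - p.1.length) ∧
      w = p.1.drop (p.1.length - p.2.1) ++ p.2.2 ++ p.1.take (p.1.length - p.2.1) with hQ
  have hex : ∀ w ∈ B, ∃ p, Q w p := by
    intro w hw
    rw [hB, Set.Finite.mem_toFinset, hBad, Set.mem_diff] at hw
    obtain ⟨f, hfF, j, mid, h1, h2, h3, h4, h5⟩ := circ_extract hF hw.1 hw.2
    exact ⟨(f, j, mid), hfF, h1, h2, h3, h4, h5⟩
  set φ : List A → List A × ℕ × List A :=
    fun w => if h : ∃ p, Q w p then Classical.choose h else ([], 0, []) with hφ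
  have hQφ : ∀ w ∈ B, Q w (φ w) := by
    intro w hw
    have h := hex w hw
    rw [hφ]
    simp only [dif_pos h]
    exact Classical.choose_spec h
  have hcb := count_bad F β hβ0 hFlen hsum ((langN F n).ncard : ℝ) (by positivity) B φ
    (fun w hw w' hw' hee => by
      have q1 := hQφ w hw
      have q2 := hQφ w' hw'
      rw [q1.2.2.2.2.2, q2.2.2.2.2.2, hee])
    (fun f _ => langN F (n - f.length))
    (fun w hw => ⟨(hQφ w hw).1, (hQφ w hw).2.1, (hQφ w hw).2.2.1, (hQφ w hw).2.2.2.2.1⟩)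
    (fun w hw => ⟨langN_finite F _, growth_inv hβ hgrow (hQφ w hw).2.2.2.1⟩)
  have hBcard : B.card = Bad.ncard := (Set.ncard_eq_toFinset_card Bad BadFin).symm
  have hdiff : Bad.ncard = (langN F n).ncard - (clangN F n).ncard :=
    Set.ncard_diff Csub Cfin
  have hle : (clangN F n).ncard ≤ (langN F n).ncard := Set.ncard_le_ncard Csub Lfin
  rw [hBcard, hdiff] at hcb
  rw [Nat.cast_sub hle] at hcb
  linarith

lemma cat_count [Finite A] (hF : ∀ f ∈ F, f ≠ ([] : List A)) (hβ : 1 < β)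
    (hgrow : ∀ n : ℕ, β * ((langN F n).ncard : ℝ) ≤ ((langN F (n + 1)).ncard : ℝ))
    (hsum : Summable fun f : F =>
      (((f : List A).length : ℝ) - 1) * β ^ (-((f : List A).length : ℤ)))
    (n m : ℕ) :
    ((langN F n).ncard : ℝ) * ((langN F m).ncard : ℝ) -
      (∑' f : F, (((f : List A).length : ℝ) - 1) * β ^ (-((f : List A).length : ℤ))) *
        (((langN F n).ncard : ℝ) * ((langN F m).ncard : ℝ)) ≤
      ((langN F (n + m)).ncard : ℝ) := by
  classical
  have hβ0 : (0:ℝ) < β := by linarith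
  have hFlen : ∀ f ∈ F, 1 ≤ f.length := by
    intro f hf
    have := hF f hf
    cases f with
    | nil => exact absurd rfl this
    | cons a l => simp
  have Lnfin := langN_finite F n
  have Lmfin := langN_finite F m
  have Lnmfin := langN_finite F (n + m)
  set P : Set (List A × List A) := (langN F n) ×ˢ (langN F m) with hP
  have Pfin : P.Finite := Lnfin.prod Lmfin
  set Bad : Set (List A × List A) := P ∩ {p | p.1 ++ p.2 ∉ langN F (n + m)} with hBad
  have BadFin : Bad.Finite := Pfin.subset Set.inter_subset_left
  have BadSub : Bad ⊆ P := Set.inter_subset_left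
  set B : Finset (List A × List A) := BadFin.toFinset with hB
  set Q : (List A × List A) → List A × ℕ × (List A × List A) → Prop := fun w p =>
    p.1 ∈ F ∧ 1 ≤ p.2.1 ∧ p.2.1 < p.1.length ∧ p.1.length - p.2.1 ≤ n ∧ p.2.1 ≤ m ∧
      p.2.2.1 ∈ langN F (n - (p.1.length - p.2.1)) ∧ p.2.2.2 ∈ langN F (m - p.2.1) ∧
      w.1 = p.2.2.1 ++ p.1.take (p.1.length - p.2.1) ∧
      w.2 = p.1.drop (p.1.length - p.2.1) ++ p.2.2.2 with hQ
  have hex : ∀ w ∈ B, ∃ p, Q w p := by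
    intro w hw
    rw [hB, Set.Finite.mem_toFinset, hBad] at hw
    obtain ⟨hwP, hwbad⟩ := hw
    rw [hP, Set.mem_prod] at hwP
    obtain ⟨f, hfF, j, x, y, h1, h2, h3, h4, h5, h6, h7, h8⟩ :=
      cat_extract hwP.1 hwP.2 hwbad
    exact ⟨(f, j, (x, y)), hfF, h1, h2, h3, h4, h5, h6, h7, h8⟩
  set φ : (List A × List A) → List A × ℕ × (List A × List A) :=
    fun w => if h : ∃ p, Q w p then Classical.choose h else ([], 0, ([], [])) with hφ
  have hQφ : ∀ w ∈ B, Q w (φ w) := by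
    intro w hw
    have h := hex w hw
    rw [hφ]
    simp only [dif_pos h]
    exact Classical.choose_spec h
  set M : ℝ := ((langN F n).ncard : ℝ) * ((langN F m).ncard : ℝ) with hM
  have hMnn : 0 ≤ M := by positivity
  have hDbound : ∀ w ∈ B,
      (((langN F (n - ((φ w).1.length - (φ w).2.1))) ×ˢ
        (langN F (m - (φ w).2.1))).ncard : ℝ) ≤ β ^ (-(((φ w).1.length : ℤ))) * M := by
    intro w hw
    obtain ⟨q1, q2, q3, q4, q5, q6, q7, q8, q9⟩ := hQφ w hw
    rw [ncard_sprod, Nat.cast_mul]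
    have b1 := growth_inv hβ hgrow q4
    have b2 := growth_inv hβ hgrow q5
    calc ((langN F (n - ((φ w).1.length - (φ w).2.1))).ncard : ℝ) *
          ((langN F (m - (φ w).2.1)).ncard : ℝ)
        ≤ (β ^ (-((((φ w).1.length - (φ w).2.1 : ℕ)) : ℤ)) * ((langN F n).ncard : ℝ)) *
          (β ^ (-(((φ w).2.1 : ℕ) : ℤ)) * ((langN F m).ncard : ℝ)) := by
          apply mul_le_mul b1 b2 (by positivity) (by positivity)
      _ = β ^ (-(((φ w).1.length : ℤ))) * M := by
          rw [hM]
          have hz : β ^ (-((((φ w).1.length - (φ w).2.1 : ℕ)) : ℤ)) *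
              β ^ (-(((φ w).2.1 : ℕ) : ℤ)) = β ^ (-(((φ w).1.length : ℤ))) := by
            rw [← zpow_add₀ (ne_of_gt hβ0)]
            congr 1
            omega
          rw [← hz]
          ring
  have hcb := count_bad F β hβ0 hFlen hsum M hMnn B φ
    (fun w hw w' hw' hee => by
      obtain ⟨_, _, _, _, _, _, _, q8, q9⟩ := hQφ w hw
      obtain ⟨_, _, _, _, _, _, _, r8, r9⟩ := hQφ w' hw'
      apply Prod.ext
      · rw [q8, r8, hee]
      · rw [q9, r9, hee])
    (fun f j => (langN F (n - (f.length - j))) ×ˢ (langN F (m - j)))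
    (fun w hw => ⟨(hQφ w hw).1, (hQφ w hw).2.1, (hQφ w hw).2.2.1,
      Set.mem_prod.mpr ⟨(hQφ w hw).2.2.2.2.2.1, (hQφ w hw).2.2.2.2.2.2.1⟩⟩)
    (fun w hw => ⟨(langN_finite F _).prod (langN_finite F _), hDbound w hw⟩)
  have hgood : P.ncard - Bad.ncard ≤ (langN F (n + m)).ncard := by
    have hinj2 : Set.InjOn (fun p : List A × List A => p.1 ++ p.2) (P \ Bad) := by
      intro p hp q hq he
      have hp1 : p.1.length = n := ((Set.mem_prod.mp hp.1).1).1
      have hq1 : q.1.length = n := ((Set.mem_prod.mp hq.1).1).1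
      obtain ⟨e1, e2⟩ := List.append_inj he (by rw [hp1, hq1])
      exact Prod.ext e1 e2
    have himg : (fun p : List A × List A => p.1 ++ p.2) '' (P \ Bad) ⊆ langN F (n + m) := by
      rintro _ ⟨p, hp, rfl⟩
      by_contra hc
      exact hp.2 ⟨hp.1, hc⟩
    calc P.ncard - Bad.ncard = (P \ Bad).ncard := (Set.ncard_diff BadSub BadFin).symm
      _ = ((fun p : List A × List A => p.1 ++ p.2) '' (P \ Bad)).ncard :=
          (Set.ncard_image_of_injOn hinj2).symm
      _ ≤ (langN F (n + m)).ncard := Set.ncard_le_ncard himg Lnmfin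
  have hPcard : (P.ncard : ℝ) = M := by rw [hP, ncard_sprod, hM]; push_cast; ring
  have hBadle : Bad.ncard ≤ P.ncard := Set.ncard_le_ncard BadSub Pfin
  have hBcard : (B.card : ℝ) = (Bad.ncard : ℝ) := by
    rw [hB, ← Set.ncard_eq_toFinset_card Bad BadFin]
  have h1 : ((P.ncard - Bad.ncard : ℕ) : ℝ) ≤ ((langN F (n + m)).ncard : ℝ) := by
    exact_mod_cast hgood
  rw [Nat.cast_sub hBadle] at h1
  linarith


lemma submult [Finite A] (F : Set (List A)) (n m : ℕ) :
    (langN F (n + m)).ncard ≤ (langN F n).ncard * (langN F m).ncard := by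
  classical
  have hinj : Set.InjOn (fun w : List A => (w.take n, w.drop n)) (langN F (n + m)) := by
    intro w hw w' hw' he
    have h1 := congrArg (fun p : List A × List A => p.1 ++ p.2) he
    simpa [List.take_append_drop] using h1
  have himg : (fun w : List A => (w.take n, w.drop n)) '' (langN F (n + m)) ⊆
      (langN F n) ×ˢ (langN F m) := by
    rintro _ ⟨w, hw, rfl⟩
    obtain ⟨hwl, hwav⟩ := hw
    constructor
    · exact ⟨by simp [hwl], fun f hf hinf => hwav f hf (hinf.trans (List.take_prefix n w).isInfix)⟩
    · exact ⟨by simp [hwl], fun f hf hinf => hwav f hf (hinf.trans (List.drop_suffix n w).isInfix)⟩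
  calc (langN F (n + m)).ncard
      = ((fun w : List A => (w.take n, w.drop n)) '' (langN F (n + m))).ncard :=
        (Set.ncard_image_of_injOn hinj).symm
    _ ≤ ((langN F n) ×ˢ (langN F m)).ncard :=
        Set.ncard_le_ncard himg ((langN_finite F n).prod (langN_finite F m))
    _ = (langN F n).ncard * (langN F m).ncard := ncard_sprod _ _

end Main


/-- Suppose `β > 1` satisfies `|ℒ_{n+1}(𝒜,ℱ)| ≥ β·|ℒ_n(𝒜,ℱ)|` for all `n`, and
`C := 1 − Σ_{f∈ℱ} (|f|−1)·β^(−|f|) > 0`. Then for all `n, m ≥ 0`,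
`C²·|L̊_n(𝒜,ℱ)|·|L̊_m(𝒜,ℱ)| ≤ |L̊_{n+m}(𝒜,ℱ)| ≤ C⁻²·|L̊_n(𝒜,ℱ)|·|L̊_m(𝒜,ℱ)|`. -/
theorem stmt15 {A : Type*} [Fintype A] (F : Set (List A))
    (hF : ∀ f ∈ F, f ≠ ([] : List A)) (β : ℝ) (hβ : 1 < β)
    (hgrow : ∀ n : ℕ, β * ((langN F n).ncard : ℝ) ≤ ((langN F (n + 1)).ncard : ℝ))
    (hsum : Summable fun f : F =>
      (((f : List A).length : ℝ) - 1) * β ^ (-((f : List A).length : ℤ)))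
    (C : ℝ)
    (hC : C = 1 - ∑' f : F, (((f : List A).length : ℝ) - 1) * β ^ (-((f : List A).length : ℤ)))
    (hCpos : 0 < C) :
    ∀ n m : ℕ,
      C ^ 2 * ((clangN F n).ncard : ℝ) * ((clangN F m).ncard : ℝ) ≤
          ((clangN F (n + m)).ncard : ℝ) ∧
      ((clangN F (n + m)).ncard : ℝ) ≤
          (C ^ 2)⁻¹ * ((clangN F n).ncard : ℝ) * ((clangN F m).ncard : ℝ) := by
  intro n m
  have hβ0 : (0:ℝ) < β := by linarith
  -- circ bound: C * |ℒ_i| ≤ |L̊_i|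
  have h6 : ∀ i : ℕ, C * ((langN F i).ncard : ℝ) ≤ ((clangN F i).ncard : ℝ) := by
    intro i
    have h := circ_count hF hβ hgrow hsum i
    rw [hC]
    linarith
  have h5 : C * (((langN F n).ncard : ℝ) * ((langN F m).ncard : ℝ)) ≤
      ((langN F (n + m)).ncard : ℝ) := by
    have h := cat_count hF hβ hgrow hsum n m
    rw [hC]
    linarith
  have hup : ∀ i : ℕ, ((clangN F i).ncard : ℝ) ≤ ((langN F i).ncard : ℝ) := by
    intro i
    exact_mod_cast Set.ncard_le_ncard (clangN_subset_langN F i) (langN_finite F i)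
  have hsm : ((langN F (n + m)).ncard : ℝ) ≤
      ((langN F n).ncard : ℝ) * ((langN F m).ncard : ℝ) := by
    exact_mod_cast submult F n m
  have e1 : ((langN F n).ncard : ℝ) ≤ C⁻¹ * ((clangN F n).ncard : ℝ) := by
    have := mul_le_mul_of_nonneg_left (h6 n) (inv_nonneg.mpr hCpos.le)
    rwa [← mul_assoc, inv_mul_cancel₀ (ne_of_gt hCpos), one_mul] at this
  have e2 : ((langN F m).ncard : ℝ) ≤ C⁻¹ * ((clangN F m).ncard : ℝ) := by
    have := mul_le_mul_of_nonneg_left (h6 m) (inv_nonneg.mpr hCpos.le)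
    rwa [← mul_assoc, inv_mul_cancel₀ (ne_of_gt hCpos), one_mul] at this
  constructor
  · calc C ^ 2 * ((clangN F n).ncard : ℝ) * ((clangN F m).ncard : ℝ)
        ≤ C ^ 2 * ((langN F n).ncard : ℝ) * ((langN F m).ncard : ℝ) := by
          apply mul_le_mul (mul_le_mul_of_nonneg_left (hup n) (by positivity)) (hup m)
            (by positivity) (by positivity)
      _ = C * (C * (((langN F n).ncard : ℝ) * ((langN F m).ncard : ℝ))) := by ring
      _ ≤ C * ((langN F (n + m)).ncard : ℝ) := mul_le_mul_of_nonneg_left h5 hCpos.le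
      _ ≤ ((clangN F (n + m)).ncard : ℝ) := h6 (n + m)
  · calc ((clangN F (n + m)).ncard : ℝ) ≤ ((langN F (n + m)).ncard : ℝ) := hup (n + m)
      _ ≤ ((langN F n).ncard : ℝ) * ((langN F m).ncard : ℝ) := hsm
      _ ≤ (C⁻¹ * ((clangN F n).ncard : ℝ)) * (C⁻¹ * ((clangN F m).ncard : ℝ)) := by
          apply mul_le_mul e1 e2 (by positivity) (by positivity)
      _ = (C ^ 2)⁻¹ * ((clangN F n).ncard : ℝ) * ((clangN F m).ncard : ℝ) := by
          rw [sq, mul_inv]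
          ring
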